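/- arXiv:1407.1311 — 3 statements merged into one kernel-verified Lean document; each statement's English description precedes it below -/
import Mathlib

section
/- Let A = ⊕_{i=1}^r A_i and B = ⊕_{k=1}^s B_k be regular decompositions of F-algebras A and B with commutation matrices M^A = (θ_{i,j}) and M^B = (η_{k,l}). Then A ⊗_F B is regular with respect to the decomposition A ⊗ B = ⊕_{i=1}^r ⊕_{k=1}^s A_i ⊗ B_k, and its matrix of commutation relations is the Kronecker product M^A ⊗ M^B, i.e. ε^{A⊗B}_{(i,k),(j,l)} = θ_{i,j}·η_{k,l}. -/
open scoped TensorProduct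

/-- A regular decomposition of an algebra `A` indexed by `ι`: a direct sum decomposition into
subspaces such that (P1) every prescribed sequence of components admits a nonzero product, and
(P2) homogeneous elements commute up to a nonzero scalar depending only on their components. -/
structure RegularDecomp (F : Type*) [Field F] (A : Type*) [Ring A] [Algebra F A]
    (ι : Type*) [DecidableEq ι] where
  comp : ι → Submodule F A
  isInternal : DirectSum.IsInternal comp
  eps : ι → ι → F
  eps_ne_zero : ∀ i j, eps i j ≠ 0
  comm : ∀ i j, ∀ x ∈ comp i, ∀ y ∈ comp j, x * y = eps i j • (y * x)
  prod_ne_zero : ∀ {n : ℕ} (idx : Fin n → ι),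
    ∃ x : Fin n → A, (∀ k, x k ∈ comp (idx k)) ∧ (List.ofFn x).prod ≠ 0

/-!
The blocks `D_i ⊗ E_k` form an internal direct sum because `A ⊗ B ≅ (⨁ D_i) ⊗ (⨁ E_k)` and
tensor products commute with direct sums. For homogeneous pure tensors
`(a ⊗ b)(a' ⊗ b') = aa' ⊗ bb' = θ η (a'a ⊗ b'b)`, and this extends bilinearly to the spans. A
nonzero product in prescribed blocks is the pure tensor of nonzero products chosen in `A` and in
`B`, and pure tensors of nonzero vectors over a field are nonzero.
-/

namespace DirectSum.IsInternal

variable {R M N ι κ : Type*} [CommSemiring R] [AddCommMonoid M] [Module R M]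
  [AddCommMonoid N] [Module R N] [DecidableEq ι] [DecidableEq κ]
  {p : ι → Submodule R M} {q : κ → Submodule R N}

theorem tensorProduct (hp : IsInternal p) (hq : IsInternal q) :
    IsInternal fun x : ι × κ =>
      LinearMap.range (TensorProduct.map (p x.1).subtype (q x.2).subtype) := by
  let S := fun x : ι × κ => LinearMap.range (TensorProduct.map (p x.1).subtype (q x.2).subtype)
  let restrict : (⨁ x : ι × κ, p x.1 ⊗[R] q x.2) →ₗ[R] ⨁ x, S x :=
    lmap fun x => (TensorProduct.map (p x.1).subtype (q x.2).subtype).rangeRestrict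
  have h_restrict : Function.Surjective restrict :=
    (lmap_surjective _).2 fun x => LinearMap.surjective_rangeRestrict _
  let e := (TensorProduct.directSum R R (fun i => p i) fun k => q k).symm ≪≫ₗ
    TensorProduct.congr (.ofBijective (coeLinearMap p) hp) (.ofBijective (coeLinearMap q) hq)
  have h_factor : coeLinearMap S ∘ₗ restrict = e.toLinearMap := by
    refine linearMap_ext _ fun ⟨i, k⟩ => TensorProduct.ext' fun a b => ?_
    simp only [restrict, S, e, LinearMap.comp_apply, lmap_lof, coeLinearMap_lof,
      LinearMap.codRestrict_apply, TensorProduct.map_tmul, Submodule.subtype_apply,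
      LinearEquiv.coe_coe, LinearEquiv.trans_apply, TensorProduct.directSum_symm_lof_tmul,
      TensorProduct.congr_tmul]
    exact congr_arg₂ _ (coeLinearMap_lof p i a).symm (coeLinearMap_lof q k b).symm
  have h_bij : Function.Bijective (coeLinearMap S ∘ restrict) := by
    rw [← LinearMap.coe_comp, h_factor]
    exact e.bijective
  exact ⟨h_bij.injective.of_comp_right h_restrict, h_bij.surjective.of_comp⟩

end DirectSum.IsInternal

theorem Submodule.mul_eq_smul_mul_of_mem_span {R S : Type*} [CommSemiring R] [Semiring S]
    [Algebra R S] {s t : Set S} {c : R} (h : ∀ a ∈ s, ∀ b ∈ t, a * b = c • (b * a))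
    {x y : S} (hx : x ∈ span R s) (hy : y ∈ span R t) : x * y = c • (y * x) := by
  induction hx, hy using span_induction₂ with
  | mem_mem a b ha hb => exact h a ha b hb
  | zero_left | zero_right => simp
  | add_left a a' b _ _ _ ha ha' => rw [add_mul, ha, ha', mul_add, smul_add]
  | add_right a b b' _ _ _ hb hb' => rw [mul_add, hb, hb', add_mul, smul_add]
  | smul_left r a b _ _ h => rw [smul_mul_assoc, h, mul_smul_comm, smul_comm]
  | smul_right r a b _ _ h => rw [mul_smul_comm, h, smul_mul_assoc, smul_comm]

namespace Algebra.TensorProduct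

variable {R A B : Type*} [CommSemiring R] [Semiring A] [Algebra R A] [Semiring B] [Algebra R B]

theorem mul_eq_smul_mul_of_mem_range_map {P P' : Submodule R A} {Q Q' : Submodule R B} {θ η : R}
    (hP : ∀ a ∈ P, ∀ a' ∈ P', a * a' = θ • (a' * a))
    (hQ : ∀ b ∈ Q, ∀ b' ∈ Q', b * b' = η • (b' * b)) {x y : A ⊗[R] B}
    (hx : x ∈ LinearMap.range (_root_.TensorProduct.map P.subtype Q.subtype))
    (hy : y ∈ LinearMap.range (_root_.TensorProduct.map P'.subtype Q'.subtype)) :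
    x * y = (θ * η) • (y * x) := by
  rw [TensorProduct.range_map_eq_span_tmul] at hx hy
  refine Submodule.mul_eq_smul_mul_of_mem_span ?_ hx hy
  rintro _ ⟨⟨a, ha⟩, ⟨b, hb⟩, rfl⟩ _ ⟨⟨a', ha'⟩, ⟨b', hb'⟩, rfl⟩
  simp only [Submodule.subtype_apply, tmul_mul_tmul, hP a ha a' ha', hQ b hb b' hb',
    TensorProduct.smul_tmul_smul, mul_comm θ η]

theorem list_prod_ofFn_tmul {n : ℕ} (a : Fin n → A) (b : Fin n → B) :
    (List.ofFn fun k => a k ⊗ₜ[R] b k).prod = (List.ofFn a).prod ⊗ₜ (List.ofFn b).prod := by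
  induction n with
  | zero => simp [one_def]
  | succ n ih => simp [List.ofFn_succ, ih]

end Algebra.TensorProduct

theorem TensorProduct.tmul_ne_zero {R M N : Type*} [CommSemiring R] [NoZeroDivisors R]
    [AddCommMonoid M] [Module R M] [Module.Projective R M]
    [AddCommMonoid N] [Module R N] [Module.Projective R N] {m : M} {n : N}
    (hm : m ≠ 0) (hn : n ≠ 0) : m ⊗ₜ[R] n ≠ 0 := by
  obtain ⟨f, hf⟩ := Module.Projective.exists_dual_ne_zero R hm
  obtain ⟨g, hg⟩ := Module.Projective.exists_dual_ne_zero R hn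
  intro h
  apply mul_ne_zero hf hg
  simpa using congrArg ((TensorProduct.lid R R).toLinearMap ∘ₗ TensorProduct.map f g) h

namespace RegularDecomp

variable {F A B ι κ : Type*} [Field F] [Ring A] [Algebra F A] [Ring B] [Algebra F B]
  [DecidableEq ι] [DecidableEq κ]

def tensorProduct (D : RegularDecomp F A ι) (E : RegularDecomp F B κ) :
    RegularDecomp F (A ⊗[F] B) (ι × κ) where
  comp x := LinearMap.range (TensorProduct.map (D.comp x.1).subtype (E.comp x.2).subtype)
  isInternal := D.isInternal.tensorProduct E.isInternal
  eps x y := D.eps x.1 y.1 * E.eps x.2 y.2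
  eps_ne_zero x y := mul_ne_zero (D.eps_ne_zero x.1 y.1) (E.eps_ne_zero x.2 y.2)
  comm x y _ hx _ hy :=
    Algebra.TensorProduct.mul_eq_smul_mul_of_mem_range_map (D.comm x.1 y.1) (E.comm x.2 y.2) hx hy
  prod_ne_zero idx := by
    obtain ⟨a, ha, ha_ne⟩ := D.prod_ne_zero (Prod.fst ∘ idx)
    obtain ⟨b, hb, hb_ne⟩ := E.prod_ne_zero (Prod.snd ∘ idx)
    refine ⟨fun k => a k ⊗ₜ b k, fun k => ⟨⟨a k, ha k⟩ ⊗ₜ ⟨b k, hb k⟩, rfl⟩, ?_⟩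
    rw [Algebra.TensorProduct.list_prod_ofFn_tmul]
    exact TensorProduct.tmul_ne_zero ha_ne hb_ne

end RegularDecomp

/-- The tensor product of regular algebras is regular, with matrix of
commutation relations the Kronecker product of the two matrices. -/
theorem tensorProduct_regular
    {F : Type*} [Field F] {A B : Type*} [Ring A] [Algebra F A] [Ring B] [Algebra F B]
    {ι κ : Type*} [DecidableEq ι] [DecidableEq κ]
    (D : RegularDecomp F A ι) (E : RegularDecomp F B κ) :
    ∃ T : RegularDecomp F (A ⊗[F] B) (ι × κ),
      (∀ i k, T.comp (i, k) =
        LinearMap.range (TensorProduct.map (D.comp i).subtype (E.comp k).subtype)) ∧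
      ∀ i j k l, T.eps (i, k) (j, l) = D.eps i j * E.eps k l :=
  ⟨D.tensorProduct E, fun _ _ => rfl, fun _ _ _ _ => rfl⟩
end

section
/- In the Grassmann algebra E of an infinite-dimensional vector space over a field F of characteristic zero, every multilinear polynomial f(x_1,...,x_m) is, modulo the T-ideal generated by the identity [x_1,x_2,x_3] = 0, equal to a linear combination Σ β_{i,j} x_{i_1}···x_{i_{m-2p}} [x_{j_1},x_{j_2}]···[x_{j_{2p-1}},x_{j_{2p}}], where the sum runs over all splittings of {1,...,m} into an increasing sequence i_1 < ... < i_{m-2p} and an increasing sequence j_1 < j_2 < ... < j_{2p}. -/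
/-- Evaluation of a noncommutative polynomial in `n` variables at elements of `A`. -/
noncomputable def polyEval {F : Type*} [CommSemiring F] {A : Type*} [Semiring A] [Algebra F A]
    {n : ℕ} (f : FreeAlgebra F (Fin n)) (v : Fin n → A) : A :=
  FreeAlgebra.lift F v f

/-- `f` is a polynomial identity for `A`. -/
def IsIdPoly (F : Type*) [CommSemiring F] (A : Type*) [Semiring A] [Algebra F A]
    {n : ℕ} (f : FreeAlgebra F (Fin n)) : Prop :=
  ∀ v : Fin n → A, polyEval f v = 0

/-- `f` is a central polynomial for `A`. -/
def IsCentralPoly (F : Type*) [CommSemiring F] (A : Type*) [Semiring A] [Algebra F A]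
    {n : ℕ} (f : FreeAlgebra F (Fin n)) : Prop :=
  ∀ v : Fin n → A, polyEval f v ∈ Set.center A

/-- `f` is a proper central polynomial for `A`. -/
def IsProperCentralPoly (F : Type*) [CommSemiring F] (A : Type*) [Semiring A] [Algebra F A]
    {n : ℕ} (f : FreeAlgebra F (Fin n)) : Prop :=
  IsCentralPoly F A f ∧ ¬ IsIdPoly F A f

/-- The product `f·g` of two polynomials in disjoint sets of variables. -/
noncomputable def disjProd {F : Type*} [CommSemiring F] {r s : ℕ}
    (f : FreeAlgebra F (Fin r)) (g : FreeAlgebra F (Fin s)) : FreeAlgebra F (Fin (r + s)) :=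
  FreeAlgebra.lift F (fun i => FreeAlgebra.ι F (Fin.castAdd s i)) f *
    FreeAlgebra.lift F (fun i => FreeAlgebra.ι F (Fin.natAdd r i)) g

/-- `A` has the primeness property on central polynomials. -/
def HasPrimeness (F : Type*) [CommSemiring F] (A : Type*) [Semiring A] [Algebra F A] : Prop :=
  (∃ (n : ℕ) (f : FreeAlgebra F (Fin n)), IsProperCentralPoly F A f) ∧
    ∀ (r s : ℕ) (f : FreeAlgebra F (Fin r)) (g : FreeAlgebra F (Fin s)),
      IsProperCentralPoly F A (disjProd f g) →
        IsProperCentralPoly F A f ∧ IsProperCentralPoly F A g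

/-- The multilinear polynomial `∑ σ, λ σ • x_{σ(1)} ⋯ x_{σ(n)}`. -/
noncomputable def mlin {F : Type*} [CommSemiring F] {n : ℕ} (lam : Equiv.Perm (Fin n) → F) :
    FreeAlgebra F (Fin n) :=
  ∑ σ : Equiv.Perm (Fin n), lam σ • (List.ofFn fun i => FreeAlgebra.ι F (σ i)).prod

/-- Direct evaluation of the multilinear polynomial with coefficients `lam`. -/
noncomputable def mlinEval {F : Type*} [CommSemiring F] {A : Type*} [Semiring A] [Algebra F A]
    {n : ℕ} (lam : Equiv.Perm (Fin n) → F) (v : Fin n → A) : A :=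
  ∑ σ : Equiv.Perm (Fin n), lam σ • (List.ofFn fun i => v (σ i)).prod

/-- The product of commutators `[x_{j₁},x_{j₂}]⋯[x_{j_{2p-1}},x_{j_{2p}}]` built from a list of
variables paired off consecutively. -/
noncomputable def pairProd {F : Type*} [CommRing F] {m : ℕ} :
    List (Fin m) → FreeAlgebra F (Fin m)
  | a :: b :: t =>
      (FreeAlgebra.ι F a * FreeAlgebra.ι F b - FreeAlgebra.ι F b * FreeAlgebra.ι F a) * pairProd t
  | _ => 1

/-- The summand `x_{i₁}⋯x_{i_{m-2p}}[x_{j₁},x_{j₂}]⋯[x_{j_{2p-1}},x_{j_{2p}}]` associated to the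
set `J` of commutator variables (both blocks taken in increasing order). -/
noncomputable def splitTerm {F : Type*} [CommRing F] {m : ℕ} (J : Finset (Fin m)) :
    FreeAlgebra F (Fin m) :=
  ((Jᶜ.sort (· ≤ ·)).map (FreeAlgebra.ι F)).prod * pairProd (J.sort (· ≤ ·))

/-- The triple commutator `[[x₁,x₂],x₃]` as a noncommutative polynomial. -/
noncomputable def tripleComm (F : Type*) [CommRing F] : FreeAlgebra F (Fin 3) :=
  (FreeAlgebra.ι F 0 * FreeAlgebra.ι F 1 - FreeAlgebra.ι F 1 * FreeAlgebra.ι F 0) *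
      FreeAlgebra.ι F 2 -
    FreeAlgebra.ι F 2 *
      (FreeAlgebra.ι F 0 * FreeAlgebra.ι F 1 - FreeAlgebra.ι F 1 * FreeAlgebra.ι F 0)

/-!
Modulo the ideal every commutator is central, and expanding `[[a, bc], d]` gives
`[a, b][c, d] = -[a, c][b, d]`; so a product of commutators of distinct variables only changes sign
when the variables are permuted. A monomial in distinct variables is straightened from the left:
moving `x_a` past a smaller `x_t` costs the central term `[x_a, x_t]`, which is absorbed, up to
sign, into the sorted block of commutators.
-/

section CommutatorIdentities

variable {A : Type*} [Ring A]

theorem lie_mul_comm_of_lie_lie_eq_zero (h : ∀ x y z : A, ⁅⁅x, y⁆, z⁆ = 0) (x y z : A) :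
    ⁅x, y⁆ * z = z * ⁅x, y⁆ :=
  sub_eq_zero.mp ((Ring.lie_def _ _).symm.trans (h x y z))

theorem lie_mul_lie_eq_neg_of_lie_lie_eq_zero (h : ∀ x y z : A, ⁅⁅x, y⁆, z⁆ = 0) (a b c d : A) :
    ⁅a, b⁆ * ⁅c, d⁆ = -(⁅a, c⁆ * ⁅b, d⁆) := by
  have key : ⁅a, b⁆ * ⁅c, d⁆ + ⁅a, c⁆ * ⁅b, d⁆ =
      ⁅⁅a, b * c⁆, d⁆ - ⁅⁅a, b⁆, d⁆ * c - b * ⁅⁅a, c⁆, d⁆ - ⁅⁅b, d⁆, ⁅a, c⁆⁆ := by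
    simp only [Ring.lie_def]
    noncomm_ring
  rw [h, h, h, h] at key
  exact eq_neg_of_add_eq_zero_left (by simpa using key)

end CommutatorIdentities

section CommutatorProducts

variable {ι A : Type*} [Ring A]

/-- An unpaired last entry is dropped, as in `pairProd`. -/
def commProd (v : ι → A) : List ι → A
  | a :: b :: t => ⁅v a, v b⁆ * commProd v t
  | _ => 1

theorem commProd_append_swap (h : ∀ x y z : A, ⁅⁅x, y⁆, z⁆ = 0) (v : ι → A) :
    ∀ (u : List ι) (a b : ι) (w : List ι), Even (u.length + w.length) →
      commProd v (u ++ b :: a :: w) = -commProd v (u ++ a :: b :: w)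
  | [], a, b, w, _ => by simp only [List.nil_append, commProd, Ring.lie_def]; noncomm_ring
  | [_], _, _, [], hw => absurd hw (by simp)
  | [p], a, b, q :: w, _ => by
    simp only [List.cons_append, List.nil_append, commProd, ← mul_assoc,
      lie_mul_lie_eq_neg_of_lie_lie_eq_zero h (v p) (v b), neg_mul]
  | x :: y :: u, a, b, w, hw => by
    have hw' : Even (u.length + w.length) := by
      simpa [Nat.even_add_one, add_right_comm _ 1] using hw
    simp only [List.cons_append, commProd, commProd_append_swap h v u a b w hw', mul_neg]

theorem commProd_append_perm (h : ∀ x y z : A, ⁅⁅x, y⁆, z⁆ = 0) (v : ι → A) {l₁ l₂ : List ι}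
    (hl : l₁.Perm l₂) (u : List ι) (he : Even (u.length + l₁.length)) :
    ∃ ε : ℤˣ, commProd v (u ++ l₂) = ε • commProd v (u ++ l₁) := by
  induction hl generalizing u with
  | nil => exact ⟨1, by simp⟩
  | cons x _ ih =>
    simpa using ih (u ++ [x]) (by simpa [add_assoc, add_comm 1] using he)
  | swap x y l =>
    refine ⟨-1, ?_⟩
    rw [commProd_append_swap h v u y x l (by simpa [Nat.even_add_one, ← add_assoc] using he)]
    simp
  | trans h₁ _ ih₁ ih₂ =>
    obtain ⟨ε₁, e₁⟩ := ih₁ u he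
    obtain ⟨ε₂, e₂⟩ := ih₂ u (h₁.length_eq ▸ he)
    exact ⟨ε₂ * ε₁, by rw [e₂, e₁, mul_smul]⟩

theorem commProd_perm (h : ∀ x y z : A, ⁅⁅x, y⁆, z⁆ = 0) (v : ι → A) {l₁ l₂ : List ι}
    (hl : l₁.Perm l₂) (he : Even l₁.length) :
    ∃ ε : ℤˣ, commProd v l₂ = ε • commProd v l₁ := by
  simpa using commProd_append_perm h v hl [] (by simpa using he)

section Straightening

variable [LinearOrder ι]

def monoCommProd (v : ι → A) (T D : Finset ι) : A :=
  (T.sort.map v).prod * commProd v D.sort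

variable (R : Type*) [CommRing R] [Algebra R A]

/-- `J` holds the variables already paired off into commutators. -/
def splitSpan (v : ι → A) (S J : Finset ι) : Submodule R A :=
  Submodule.span R ((fun D => monoCommProd v (S \ D) (J ∪ D)) ''
    ↑(S.powerset.filter fun D => Even D.card))

variable {R}

theorem monoCommProd_mem_splitSpan (v : ι → A) {S J D : Finset ι} (hD : D ⊆ S)
    (he : Even D.card) : monoCommProd v (S \ D) (J ∪ D) ∈ splitSpan R v S J :=
  Submodule.subset_span ⟨D, by simp [hD, he], rfl⟩

theorem mul_monoCommProd_of_forall_lt (v : ι → A) {t : ι} {T : Finset ι}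
    (ht : ∀ x ∈ T, t < x) (D : Finset ι) :
    v t * monoCommProd v T D = monoCommProd v (insert t T) D := by
  rw [monoCommProd, monoCommProd, Finset.sort_insert _ (fun x hx => (ht x hx).le)
    (fun h => lt_irrefl t (ht t h)), List.map_cons, List.prod_cons, mul_assoc]

theorem mul_mem_splitSpan_of_forall_lt (v : ι → A) {t : ι} {S J : Finset ι}
    (ht : ∀ x ∈ S, t < x) {y : A} (hy : y ∈ splitSpan R v S J) :
    v t * y ∈ splitSpan R v (insert t S) J := by
  refine (Submodule.span_le (p := (splitSpan R v (insert t S) J).comap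
    (LinearMap.mulLeft R (v t)))).2 ?_ hy
  rintro _ ⟨D, hD, rfl⟩
  obtain ⟨hDS, he⟩ := Finset.mem_filter.1 hD
  have htD : t ∉ D := fun h => lt_irrefl t (ht t (Finset.mem_powerset.1 hDS h))
  have hmem := monoCommProd_mem_splitSpan (R := R) v (J := J)
    ((Finset.mem_powerset.1 hDS).trans (Finset.subset_insert t S)) he
  rw [Finset.insert_sdiff_of_notMem _ htD] at hmem
  show v t * _ ∈ splitSpan R v (insert t S) J
  rwa [mul_monoCommProd_of_forall_lt v (fun x hx => ht x (Finset.mem_sdiff.1 hx).1)]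

theorem splitSpan_sdiff_le (v : ι → A) {S J D : Finset ι} (hD : D ⊆ S) (he : Even D.card) :
    splitSpan R v (S \ D) (J ∪ D) ≤ splitSpan R v S J := by
  refine Submodule.span_le.2 ?_
  rintro _ ⟨D', hD', rfl⟩
  obtain ⟨hD'S, he'⟩ := Finset.mem_filter.1 hD'
  replace hD'S := Finset.mem_powerset.1 hD'S
  have hmem := monoCommProd_mem_splitSpan (R := R) v (J := J)
    (Finset.union_subset hD (hD'S.trans Finset.sdiff_subset))
    (by rw [Finset.card_union_of_disjoint (Finset.disjoint_of_subset_right hD'S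
      Finset.disjoint_sdiff)]; exact he.add he')
  show monoCommProd v ((S \ D) \ D') (J ∪ D ∪ D') ∈ _
  rwa [sdiff_sdiff_left, Finset.sup_eq_union, Finset.union_assoc]

theorem lie_mul_monoCommProd (h : ∀ x y z : A, ⁅⁅x, y⁆, z⁆ = 0) (v : ι → A) {a b : ι}
    {J : Finset ι} (hab : a ≠ b) (ha : a ∉ J) (hb : b ∉ J) (hJ : Even J.card) (T : Finset ι) :
    ∃ ε : ℤˣ, ⁅v a, v b⁆ * monoCommProd v T J = ε • monoCommProd v T ({a, b} ∪ J) := by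
  have hperm : (a :: b :: J.sort).Perm ({a, b} ∪ J).sort :=
    List.perm_of_nodup_nodup_toFinset_eq (by simp [hab, ha, hb]) (Finset.sort_nodup _ _)
      (by ext; simp)
  obtain ⟨ε, hε⟩ := commProd_perm h v hperm.symm
    (hperm.length_eq ▸ by simpa [Nat.even_add_one] using hJ)
  refine ⟨ε, ?_⟩
  rw [monoCommProd, monoCommProd, ← mul_assoc, lie_mul_comm_of_lie_lie_eq_zero h, mul_assoc]
  change _ * commProd v (a :: b :: J.sort) = _
  rw [hε, mul_smul_comm]

theorem lie_mul_monoCommProd_mem_splitSpan (h : ∀ x y z : A, ⁅⁅x, y⁆, z⁆ = 0) (v : ι → A)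
    {a b : ι} {T J : Finset ι} (hab : a ≠ b) (haT : a ∉ T) (hbT : b ∉ T) (haJ : a ∉ J)
    (hbJ : b ∉ J) (hJ : Even J.card) :
    ⁅v a, v b⁆ * monoCommProd v T J ∈ splitSpan R v ({a, b} ∪ T) J := by
  obtain ⟨ε, hε⟩ := lie_mul_monoCommProd h v hab haJ hbJ hJ T
  have hmem := monoCommProd_mem_splitSpan (R := R) v (S := {a, b} ∪ T) (J := J)
    Finset.subset_union_left (by simp [Finset.card_pair hab])
  rw [Finset.union_sdiff_cancel_left (by simp [haT, hbT]), Finset.union_comm J] at hmem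
  rw [hε, Units.smul_def]
  exact Submodule.smul_of_tower_mem _ _ hmem

theorem mul_monoCommProd_mem_splitSpan (h : ∀ x y z : A, ⁅⁅x, y⁆, z⁆ = 0) (v : ι → A) {a : ι}
    {T J : Finset ι} (haT : a ∉ T) (haJ : a ∉ J) (hTJ : Disjoint T J) (hJ : Even J.card) :
    v a * monoCommProd v T J ∈ splitSpan R v (insert a T) J := by
  have hgen (T : Finset ι) : monoCommProd v T J ∈ splitSpan R v T J := by
    simpa using monoCommProd_mem_splitSpan (R := R) v (S := T) (J := J) (D := ∅) (by simp) (by simp)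
  induction T using Finset.induction_on_min with
  | empty => rw [mul_monoCommProd_of_forall_lt v (by simp)]; exact hgen _
  | insert t T ht ih =>
    obtain ⟨hat, haT⟩ : a ≠ t ∧ a ∉ T := by simpa [not_or] using haT
    obtain ⟨htJ, hTJ⟩ := Finset.disjoint_insert_left.1 hTJ
    rcases hat.lt_or_gt with hlt | hta
    · rw [mul_monoCommProd_of_forall_lt v]
      · exact hgen _
      · simpa using ⟨hlt, fun x hx => hlt.trans (ht x hx)⟩
    · have hswap : v a * monoCommProd v (insert t T) J =
          v t * (v a * monoCommProd v T J) + ⁅v a, v t⁆ * monoCommProd v T J := by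
        rw [← mul_monoCommProd_of_forall_lt v ht, Ring.lie_def]
        noncomm_ring
      rw [hswap, Finset.insert_comm]
      refine Submodule.add_mem _ (mul_mem_splitSpan_of_forall_lt v ?_ (ih haT hTJ)) ?_
      · simpa using ⟨hta, ht⟩
      · convert lie_mul_monoCommProd_mem_splitSpan (R := R) h v hat haT
          (fun h => lt_irrefl t (ht t h)) haJ htJ hJ using 2
        ext; simp only [Finset.mem_insert, Finset.mem_union, Finset.mem_singleton]; tauto

theorem mul_mem_splitSpan (h : ∀ x y z : A, ⁅⁅x, y⁆, z⁆ = 0) (v : ι → A) {a : ι}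
    {S J : Finset ι} (haS : a ∉ S) (haJ : a ∉ J) (hSJ : Disjoint S J) (hJ : Even J.card)
    {y : A} (hy : y ∈ splitSpan R v S J) : v a * y ∈ splitSpan R v (insert a S) J := by
  refine (Submodule.span_le (p := (splitSpan R v (insert a S) J).comap
    (LinearMap.mulLeft R (v a)))).2 ?_ hy
  rintro _ ⟨D, hD, rfl⟩
  obtain ⟨hDS, he⟩ := Finset.mem_filter.1 hD
  replace hDS := Finset.mem_powerset.1 hDS
  have haD : a ∉ D := fun h => haS (hDS h)
  have hmem := mul_monoCommProd_mem_splitSpan (R := R) h v (T := S \ D) (J := J ∪ D)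
    (fun h => haS (Finset.mem_sdiff.1 h).1) (by simp [haJ, haD])
    (Finset.disjoint_union_right.2 ⟨Finset.disjoint_of_subset_left Finset.sdiff_subset hSJ,
      Finset.sdiff_disjoint⟩)
    (by rw [Finset.card_union_of_disjoint (Finset.disjoint_of_subset_left hDS hSJ).symm]
        exact hJ.add he)
  rw [← Finset.insert_sdiff_of_notMem _ haD] at hmem
  exact splitSpan_sdiff_le v (hDS.trans (Finset.subset_insert a S)) he hmem

theorem listProd_mem_splitSpan (h : ∀ x y z : A, ⁅⁅x, y⁆, z⁆ = 0) (v : ι → A) {L : List ι}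
    (hL : L.Nodup) : (L.map v).prod ∈ splitSpan R v L.toFinset ∅ := by
  induction L with
  | nil => simpa [monoCommProd, commProd] using
      monoCommProd_mem_splitSpan (R := R) v (S := ∅) (J := ∅) (D := ∅) subset_rfl (by simp)
  | cons a L ih =>
    rw [List.nodup_cons] at hL
    rw [List.map_cons, List.prod_cons, List.toFinset_cons]
    exact mul_mem_splitSpan h v (by simpa using hL.1) (Finset.notMem_empty a)
      (Finset.disjoint_empty_right _) (by simp) (ih hL.2)

end Straightening

end CommutatorProducts

section FreeAlgebra

variable {F : Type*} [CommRing F] {A : Type*} [Ring A] [Algebra F A] {m : ℕ}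

theorem polyEval_tripleComm (v : Fin 3 → A) : polyEval (tripleComm F) v = ⁅⁅v 0, v 1⁆, v 2⁆ := by
  simp [polyEval, tripleComm, Ring.lie_def]

theorem map_pairProd (φ : FreeAlgebra F (Fin m) →ₐ[F] A) :
    ∀ L : List (Fin m), φ (pairProd L) = commProd (φ ∘ FreeAlgebra.ι F) L
  | a :: b :: t => by simp [pairProd, commProd, Ring.lie_def, map_pairProd φ t]
  | [] => map_one φ
  | [_] => map_one φ

theorem map_splitTerm (φ : FreeAlgebra F (Fin m) →ₐ[F] A) (J : Finset (Fin m)) :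
    φ (splitTerm J) = monoCommProd (φ ∘ FreeAlgebra.ι F) Jᶜ J := by
  simp [splitTerm, monoCommProd, map_pairProd, map_list_prod, List.map_map]

theorem map_mlin (φ : FreeAlgebra F (Fin m) →ₐ[F] A) (lam : Equiv.Perm (Fin m) → F) :
    φ (mlin lam) = ∑ σ, lam σ • ((List.ofFn σ).map (φ ∘ FreeAlgebra.ι F)).prod := by
  simp only [mlin, map_sum, map_smul, map_list_prod, List.map_ofFn]
  rfl

end FreeAlgebra

namespace TwoSidedIdeal

variable {B : Type*} [Ring B] (I : TwoSidedIdeal B)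

theorem mem_iff_mkₐ_eq_zero (R : Type*) [CommSemiring R] [Algebra R B] {x : B} :
    x ∈ I ↔ I.ringCon.mkₐ R x = 0 := by
  conv_lhs => rw [← I.ker_ringCon_mk']
  exact mem_ker _

theorem lie_lie_eq_zero (hI : ∀ a b c : B, ⁅⁅a, b⁆, c⁆ ∈ I) (x y z : I.ringCon.Quotient) :
    ⁅⁅x, y⁆, z⁆ = 0 := by
  obtain ⟨a, rfl⟩ := I.ringCon.mk'_surjective x
  obtain ⟨b, rfl⟩ := I.ringCon.mk'_surjective y
  obtain ⟨c, rfl⟩ := I.ringCon.mk'_surjective z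
  simpa [Ring.lie_def] using (I.mem_iff_mkₐ_eq_zero ℤ).1 (hI a b c)

end TwoSidedIdeal

theorem exists_mlin_sub_sum_splitTerm_mem {F : Type*} [CommRing F] {m : ℕ}
    (I : TwoSidedIdeal (FreeAlgebra F (Fin m))) (hI : ∀ a b c : FreeAlgebra F (Fin m), ⁅⁅a, b⁆, c⁆ ∈ I)
    (lam : Equiv.Perm (Fin m) → F) :
    ∃ β : Finset (Fin m) → F,
      mlin lam - ∑ J ∈ Finset.univ.filter (fun J : Finset (Fin m) => Even J.card),
        β J • splitTerm J ∈ I := by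
  let π := I.ringCon.mkₐ F
  have hmem : π (mlin lam) ∈ splitSpan F (π ∘ FreeAlgebra.ι F) Finset.univ ∅ := by
    rw [map_mlin]
    refine Submodule.sum_mem _ fun σ _ => Submodule.smul_mem _ _ ?_
    have hσ : (List.ofFn σ).toFinset = Finset.univ :=
      Finset.eq_univ_of_forall fun i => by simpa using σ.surjective i
    simpa [hσ] using listProd_mem_splitSpan (I.lie_lie_eq_zero hI) _ (List.nodup_ofFn.2 σ.injective)
  obtain ⟨β, hβ⟩ := (Submodule.mem_span_image_finset_iff_exists_fun' F).1 hmem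
  refine ⟨β, (I.mem_iff_mkₐ_eq_zero F).2 ?_⟩
  rw [map_sub, sub_eq_zero, ← hβ, map_sum, Finset.powerset_univ]
  refine Finset.sum_congr rfl fun J _ => ?_
  rw [map_smul, map_splitTerm, Finset.compl_eq_univ_sdiff, Finset.empty_union]

theorem multilinear_mod_grassmann_identities_general
    (F : Type*) [Field F] {m : ℕ} (lam : Equiv.Perm (Fin m) → F) :
    ∃ β : Finset (Fin m) → F,
      mlin lam - ∑ J ∈ Finset.univ.filter (fun J : Finset (Fin m) => Even J.card),
          β J • splitTerm J ∈
        TwoSidedIdeal.span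
          {y : FreeAlgebra F (Fin m) |
            ∃ v : Fin 3 → FreeAlgebra F (Fin m), y = polyEval (tripleComm F) v} := by
  refine exists_mlin_sub_sum_splitTerm_mem _ (fun a b c => TwoSidedIdeal.subset_span ?_) lam
  exact ⟨![a, b, c], by simp [polyEval_tripleComm]⟩

/-- Modulo the T-ideal generated by `[x₁,x₂,x₃]` (the identities of the Grassmann
algebra), every multilinear polynomial is a linear combination of the terms
`x_{i₁}⋯x_{i_{m-2p}}[x_{j₁},x_{j₂}]⋯[x_{j_{2p-1}},x_{j_{2p}}]` over all splittings of the
variables into two increasing sequences. -/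
theorem multilinear_mod_grassmann_identities
    (F : Type*) [Field F] [CharZero F] {m : ℕ} (lam : Equiv.Perm (Fin m) → F) :
    ∃ β : Finset (Fin m) → F,
      mlin lam - ∑ J ∈ Finset.univ.filter (fun J : Finset (Fin m) => Even J.card),
          β J • splitTerm J ∈
        TwoSidedIdeal.span
          {y : FreeAlgebra F (Fin m) |
            ∃ v : Fin 3 → FreeAlgebra F (Fin m), y = polyEval (tripleComm F) v} :=
  multilinear_mod_grassmann_identities_general F lam
end

section
/- Let E be the Grassmann algebra of an infinite-dimensional vector space over a field F of characteristic zero. If f(x_1,...,x_m) is a multilinear polynomial that is not a polynomial identity for E, then there exist elements a_1,...,a_m ∈ E such that f(a_1,...,a_m) is a nonzero element of the center Z(E) of E. -/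
/-!
Split each argument into its even and odd parts and expand by multilinearity: whenever some
value of `f` has a nonzero even part, some evaluation at homogeneous arguments is a nonzero
even element, and even elements of `E` are central. If instead a nonzero value `u = f(v)` is
odd, choose a generator `e` with `u e ≠ 0` (one not occurring in `u`) and apply the algebra
endomorphism `e_i ↦ e_i (1 + e)` to the arguments: it sends `u` to `u + u e`, whose even
part `u e` is nonzero.
-/

section Multilinear

variable {F A : Type*} [CommSemiring F] [Semiring A] [Algebra F A] {n : ℕ}

noncomputable def mlinMultilinearMap (lam : Equiv.Perm (Fin n) → F) :
    MultilinearMap F (fun _ : Fin n => A) A :=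
  ∑ σ, lam σ • (MultilinearMap.mkPiAlgebraFin F n A).domDomCongr σ

theorem mlinMultilinearMap_apply (lam : Equiv.Perm (Fin n) → F) (v : Fin n → A) :
    mlinMultilinearMap lam v = mlinEval lam v := by
  simp [mlinMultilinearMap, mlinEval, MultilinearMap.domDomCongr_apply]

theorem AlgHom.map_mlinEval {B : Type*} [Semiring B] [Algebra F B] (φ : A →ₐ[F] B)
    (lam : Equiv.Perm (Fin n) → F) (v : Fin n → A) :
    φ (mlinEval lam v) = mlinEval lam (fun k => φ (v k)) := by
  simp [mlinEval, map_list_prod, List.map_ofFn, Function.comp_def]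

end Multilinear

section Graded

variable {F A ι : Type*} [CommSemiring F] [Semiring A] [Algebra F A] [AddCommMonoid ι]
  (𝒜 : ι → Submodule F A) {n : ℕ}

theorem mlinEval_mem_graded [SetLike.GradedMonoid 𝒜] (lam : Equiv.Perm (Fin n) → F)
    {w : Fin n → A} {d : Fin n → ι} (hw : ∀ k, w k ∈ 𝒜 (d k)) :
    mlinEval lam w ∈ 𝒜 (∑ k, d k) := by
  refine Submodule.sum_mem _ fun σ _ => Submodule.smul_mem _ _ ?_
  have h := SetLike.list_prod_ofFn_mem_graded (A := 𝒜) (d ∘ σ) (w ∘ σ) fun k => hw (σ k)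
  rwa [List.sum_ofFn, Function.comp_def, Equiv.sum_comp σ d] at h

variable [DecidableEq ι]

theorem sum_gradedRingProj [GradedRing 𝒜] [Fintype ι] (x : A) :
    ∑ i, GradedRing.proj 𝒜 i x = x := by
  classical
  conv_rhs => rw [← DirectSum.sum_support_decompose 𝒜 x]
  refine (Finset.sum_subset (Finset.subset_univ _) fun i _ hi => ?_).symm
  simp [DFinsupp.notMem_support_iff.mp hi]

theorem exists_mlinEval_mem_ne_zero [GradedAlgebra 𝒜] [Fintype ι]
    (lam : Equiv.Perm (Fin n) → F) (v : Fin n → A) {i : ι}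
    (hv : GradedRing.proj 𝒜 i (mlinEval lam v) ≠ 0) :
    ∃ w, mlinEval lam w ∈ 𝒜 i ∧ mlinEval lam w ≠ 0 := by
  have hexpand : mlinEval lam v =
      ∑ r : Fin n → ι, mlinEval lam (fun k => GradedRing.proj 𝒜 (r k) (v k)) := by
    conv_lhs => rw [← funext fun k => sum_gradedRingProj 𝒜 (v k)]
    simp only [← mlinMultilinearMap_apply, MultilinearMap.map_sum]
  rw [hexpand, map_sum] at hv
  obtain ⟨r, -, hr⟩ := Finset.exists_ne_zero_of_sum_ne_zero hv
  have hmem := mlinEval_mem_graded 𝒜 lam (w := fun k => GradedRing.proj 𝒜 (r k) (v k))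
    fun k => SetLike.coe_mem _
  have hdeg : ∑ k, r k = i := by
    by_contra hne
    exact hr (DirectSum.decompose_of_mem_ne 𝒜 hmem hne)
  rw [hdeg] at hmem
  exact ⟨_, hmem, by rwa [GradedRing.proj_apply, DirectSum.decompose_of_mem_same 𝒜 hmem] at hr⟩

theorem mem_one_of_gradedRingProj_zero_eq_zero (𝒜 : ZMod 2 → Submodule F A) [GradedRing 𝒜]
    {x : A} (hx : GradedRing.proj 𝒜 0 x = 0) : x ∈ 𝒜 1 := by
  have hx_odd : x = GradedRing.proj 𝒜 1 x :=
    calc x = ∑ i, GradedRing.proj 𝒜 i x := (sum_gradedRingProj 𝒜 x).symm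
      _ = GradedRing.proj 𝒜 1 x := Finset.sum_eq_single_of_mem 1 (Finset.mem_univ _)
          fun i _ hi => by rwa [show i = 0 by revert i; decide]
  exact hx_odd ▸ SetLike.coe_mem _

end Graded

namespace ExteriorAlgebra

open CliffordAlgebra

section Generic

variable {R M : Type*} [CommRing R] [AddCommGroup M] [Module R M]

local notation "𝓔" => evenOdd (0 : QuadraticForm R M)

theorem ι_mul_eq_involute_mul (m : M) (x : ExteriorAlgebra R M) :
    ι R m * x = involute (Q := (0 : QuadraticForm R M)) x * ι R m := by
  induction x using CliffordAlgebra.induction with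
  | algebraMap r => rw [AlgHom.commutes, Algebra.commutes]
  | ι a => rw [involute_ι, neg_mul, eq_neg_iff_add_eq_zero, ι_add_mul_swap]
  | mul a b iha ihb => rw [← mul_assoc, iha, mul_assoc, ihb, map_mul, mul_assoc]
  | add a b iha ihb => rw [mul_add, iha, ihb, map_add, add_mul]

theorem mem_center_of_mem_even {x : ExteriorAlgebra R M} (hx : x ∈ 𝓔 0) :
    x ∈ Set.center (ExteriorAlgebra R M) := by
  rw [Semigroup.mem_center_iff]
  intro y
  induction y using CliffordAlgebra.induction with
  | algebraMap r => exact Algebra.commutes r x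
  | ι m => rw [ι_mul_eq_involute_mul, involute_eq_of_mem_even hx]
  | mul a b iha ihb => rw [mul_assoc, ihb, ← mul_assoc, iha, mul_assoc]
  | add a b iha ihb => rw [add_mul, mul_add, iha, ihb]

theorem contractLeft_mul (d : Module.Dual R M) (x y : ExteriorAlgebra R M) :
    contractLeft d (x * y) = contractLeft d x * y + involute x * contractLeft d y := by
  induction x using CliffordAlgebra.induction generalizing y with
  | algebraMap r =>
      rw [← Algebra.smul_def, map_smul, contractLeft_algebraMap, zero_mul, zero_add,
        AlgHom.commutes, ← Algebra.smul_def]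
  | ι m =>
      rw [contractLeft_ι_mul, contractLeft_ι, involute_ι, ← Algebra.smul_def, neg_mul,
        sub_eq_add_neg]
  | mul a b iha ihb =>
      rw [mul_assoc, iha, ihb, iha b, map_mul]
      noncomm_ring
  | add a b iha ihb =>
      rw [add_mul, map_add, iha, ihb, map_add, map_add]
      noncomm_ring

theorem one_add_ι_mul_ι (g m : M) : (1 + ι R g) * ι R m = ι R m * (1 - ι R g) := by
  rw [add_mul, ι_mul_eq_involute_mul, involute_ι, mul_sub]
  noncomm_ring

theorem one_sub_ι_mul_one_add_ι (g : M) : (1 - ι R g) * (1 + ι R g) = 1 := by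
  rw [sub_mul, mul_add (ι R g), ι_sq_zero]
  noncomm_ring

def shearBy (g : M) : ExteriorAlgebra R M →ₐ[R] ExteriorAlgebra R M :=
  lift R ⟨(LinearMap.mulRight R (1 + ι R g)).comp (ι R), fun m => by
    change ι R m * (1 + ι R g) * (ι R m * (1 + ι R g)) = 0
    rw [mul_assoc, ← mul_assoc (1 + ι R g), one_add_ι_mul_ι, ← mul_assoc, ← mul_assoc,
      ι_sq_zero, zero_mul, zero_mul]⟩

theorem shearBy_ι (g m : M) : shearBy g (ι R m) = ι R m * (1 + ι R g) :=
  lift_ι_apply _ _ _ _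

theorem shearBy_ι_mul_ι (g a b : M) : shearBy g (ι R a * ι R b) = ι R a * ι R b := by
  rw [map_mul, shearBy_ι, shearBy_ι, mul_assoc, ← mul_assoc (1 + ι R g), one_add_ι_mul_ι,
    mul_assoc, one_sub_ι_mul_one_add_ι, mul_one]

theorem shearBy_of_mem_odd (g : M) {x : ExteriorAlgebra R M} (hx : x ∈ 𝓔 1) :
    shearBy g x = x + x * ι R g := by
  induction x, hx using odd_induction with
  | ι m => rw [shearBy_ι, mul_add, mul_one]
  | add x y _ _ hx hy => rw [map_add, hx, hy, add_mul]; abel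
  | ι_mul_ι_mul a b x _ hx =>
      rw [map_mul, shearBy_ι_mul_ι, hx, mul_add, mul_assoc (ι R a * ι R b) x]

end Generic

section Finsupp

variable {R κ : Type*} [CommRing R]

theorem exists_finset_contractLeft_lapply_eq_zero (x : ExteriorAlgebra R (κ →₀ R)) :
    ∃ s : Finset κ, ∀ j ∉ s, contractLeft (Finsupp.lapply j) x = 0 := by
  classical
  induction x using CliffordAlgebra.induction with
  | algebraMap r => exact ⟨∅, fun j _ => contractLeft_algebraMap _ _ _⟩
  | ι v =>
      refine ⟨v.support, fun j hj => ?_⟩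
      rw [contractLeft_ι, Finsupp.lapply_apply, Finsupp.notMem_support_iff.mp hj, map_zero]
  | mul a b iha ihb =>
      obtain ⟨s, hs⟩ := iha
      obtain ⟨t, ht⟩ := ihb
      refine ⟨s ∪ t, fun j hj => ?_⟩
      rw [Finset.mem_union, not_or] at hj
      rw [contractLeft_mul, hs j hj.1, ht j hj.2, zero_mul, mul_zero, add_zero]
  | add a b iha ihb =>
      obtain ⟨s, hs⟩ := iha
      obtain ⟨t, ht⟩ := ihb
      refine ⟨s ∪ t, fun j hj => ?_⟩
      rw [Finset.mem_union, not_or] at hj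
      rw [map_add, hs j hj.1, ht j hj.2, add_zero]

theorem exists_mul_ι_ne_zero [Infinite κ] {x : ExteriorAlgebra R (κ →₀ R)} (hx : x ≠ 0) :
    ∃ g : κ →₀ R, x * ι R g ≠ 0 := by
  obtain ⟨s, hs⟩ := exists_finset_contractLeft_lapply_eq_zero x
  obtain ⟨j, hj⟩ := Infinite.exists_notMem_finset s
  refine ⟨Finsupp.single j 1, fun h => hx ?_⟩
  have hcontract := congrArg (contractLeft (Finsupp.lapply j)) h
  rw [contractLeft_mul, hs j hj, zero_mul, zero_add, contractLeft_ι, Finsupp.lapply_apply,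
    Finsupp.single_eq_same, map_one, mul_one, map_zero] at hcontract
  simpa using congrArg involute hcontract

end Finsupp

end ExteriorAlgebra

theorem grassmann_multilinear_central_value_general
    (F : Type*) [Field F] {m : ℕ} (lam : Equiv.Perm (Fin m) → F)
    (h : ¬ ∀ v : Fin m → ExteriorAlgebra F (ℕ →₀ F), mlinEval lam v = 0) :
    ∃ a : Fin m → ExteriorAlgebra F (ℕ →₀ F),
      mlinEval lam a ≠ 0 ∧ mlinEval lam a ∈ Set.center (ExteriorAlgebra F (ℕ →₀ F)) := by
  let 𝓔 := CliffordAlgebra.evenOdd (0 : QuadraticForm F (ℕ →₀ F))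
  suffices ∃ v, GradedRing.proj 𝓔 0 (mlinEval lam v) ≠ 0 by
    obtain ⟨v, hv⟩ := this
    obtain ⟨a, ha_even, ha⟩ := exists_mlinEval_mem_ne_zero 𝓔 lam v hv
    exact ⟨a, ha, ExteriorAlgebra.mem_center_of_mem_even ha_even⟩
  obtain ⟨v, hv⟩ := not_forall.mp h
  by_cases hv_even : GradedRing.proj 𝓔 0 (mlinEval lam v) = 0
  · have hv_odd := mem_one_of_gradedRingProj_zero_eq_zero 𝓔 hv_even
    obtain ⟨g, hg⟩ := ExteriorAlgebra.exists_mul_ι_ne_zero hv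
    refine ⟨fun k => ExteriorAlgebra.shearBy g (v k), ?_⟩
    rw [← AlgHom.map_mlinEval, ExteriorAlgebra.shearBy_of_mem_odd g hv_odd, map_add,
      hv_even, zero_add, GradedRing.proj_apply, DirectSum.decompose_of_mem_same]
    · exact hg
    · have h_even := SetLike.mul_mem_graded hv_odd (CliffordAlgebra.ι_mem_evenOdd_one _ g)
      rwa [show (1 + 1 : ZMod 2) = 0 by decide] at h_even
  · exact ⟨v, hv_even⟩

/-- In the infinite-dimensional Grassmann algebra over a field of characteristic
zero, every multilinear non-identity admits a nonzero central evaluation. -/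
theorem grassmann_multilinear_central_value
    (F : Type*) [Field F] [CharZero F] {m : ℕ} (lam : Equiv.Perm (Fin m) → F)
    (h : ¬ ∀ v : Fin m → ExteriorAlgebra F (ℕ →₀ F), mlinEval lam v = 0) :
    ∃ a : Fin m → ExteriorAlgebra F (ℕ →₀ F),
      mlinEval lam a ≠ 0 ∧ mlinEval lam a ∈ Set.center (ExteriorAlgebra F (ℕ →₀ F)) :=
  grassmann_multilinear_central_value_general F lam h
end
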